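/- arXiv:2104.02250 — 2 statements merged into one kernel-verified Lean document; each statement's English description precedes it below -/
import Mathlib

section
/- φ(0) = 15/2; moreover the unique global minimizer η* of φ is strictly positive, hence α* < 15/2, and for α = 15/2 the smaller of the two solutions of the equation φ(η) = α equals 0. -/
open MeasureTheory Real

noncomputable section

/-- `φ(η) = (∫₀¹ e^{η z²} dz) / (∫₀¹ z² (1 − z²) e^{η z²} dz)`. -/
noncomputable def phi (η : ℝ) : ℝ :=
  (∫ z in (0:ℝ)..1, Real.exp (η * z ^ 2)) /
    (∫ z in (0:ℝ)..1, z ^ 2 * (1 - z ^ 2) * Real.exp (η * z ^ 2))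

/-!
For `c > 4` write `1 - c t(1 - t) = c (t - a)(t - b)` with `a, b ≠ 1`. Then the numerator
`∫₀¹ (1 - c z²(1 - z²)) e^{ηz²} dz` of `φ(η) - c` is `c e^{aη} Q(η)` with
`Q(η) = e^{-aη} ∫₀¹ (z² - a)(z² - b) e^{ηz²} dz`, and `Q'` is a positive multiple of
`P(η) = e^{-bη} ∫₀¹ (z² - a)²(z² - b) e^{ηz²} dz`, which is strictly increasing because
`P'(η) = e^{-bη} ∫₀¹ (z² - a)²(z² - b)² e^{ηz²} dz > 0`. Hence `Q` decreases and then increases,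
so `φ` is strictly quasiconvex (`φ > 4` makes every level `c` admissible).
Since `φ(0) = 15/2`, `φ'(0) < 0` and `φ(2800) ≥ 15/2`, quasiconvexity confines the sublevel set
`{φ ≤ 15/2}` to `[0, 2800]`; so `φ` attains its minimum, the minimum is strict by quasiconvexity,
and it is attained at a positive point.
-/

open Set Filter
open scoped Interval

def expSqIntegral (g : ℝ → ℝ) (η : ℝ) : ℝ := ∫ z in (0:ℝ)..1, g z * exp (η * z ^ 2)

section expSqIntegral

variable {g h : ℝ → ℝ}

theorem intervalIntegrable_mul_exp_sq (hg : Continuous g) (η : ℝ) :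
    IntervalIntegrable (fun z => g z * exp (η * z ^ 2)) volume 0 1 :=
  Continuous.intervalIntegrable (by fun_prop) 0 1

theorem hasDerivAt_expSqIntegral (hg : Continuous g) (η : ℝ) :
    HasDerivAt (expSqIntegral g) (expSqIntegral (fun z => z ^ 2 * g z) η) η := by
  have hderiv (x z : ℝ) :
      HasDerivAt (fun x => g z * exp (x * z ^ 2)) (z ^ 2 * g z * exp (x * z ^ 2)) x :=
    (((hasDerivAt_mul_const (z ^ 2)).exp).const_mul (g z)).congr_deriv (by ring)
  have hbound : ∀ z ∈ Ι (0:ℝ) 1, ∀ x ∈ Metric.ball η 1,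
      ‖z ^ 2 * g z * exp (x * z ^ 2)‖ ≤ |g z| * exp (|η| + 1) := by
    intro z hz x hx
    rw [uIoc_of_le zero_le_one] at hz
    have hz2 : z ^ 2 ≤ 1 := pow_le_one₀ hz.1.le hz.2
    have hxη : |x| < |η| + 1 := by
      have := abs_sub_abs_le_abs_sub x η
      rw [Metric.mem_ball, Real.dist_eq] at hx
      linarith
    have hexp : exp (x * z ^ 2) ≤ exp (|η| + 1) := exp_le_exp.2 <| by
      nlinarith [le_abs_self x, abs_nonneg x, sq_nonneg z]
    rw [norm_mul, norm_mul, norm_of_nonneg (sq_nonneg z), norm_of_nonneg (exp_pos _).le,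
      Real.norm_eq_abs]
    calc z ^ 2 * |g z| * exp (x * z ^ 2) ≤ 1 * |g z| * exp (|η| + 1) := by gcongr
      _ = |g z| * exp (|η| + 1) := by ring
  exact (intervalIntegral.hasDerivAt_integral_of_dominated_loc_of_deriv_le
    (Metric.ball_mem_nhds η one_pos)
    (Eventually.of_forall fun x =>
      (by fun_prop : Continuous fun z => g z * exp (x * z ^ 2)).aestronglyMeasurable)
    (intervalIntegrable_mul_exp_sq hg η)
    (by fun_prop : Continuous fun z => z ^ 2 * g z * exp (η * z ^ 2)).aestronglyMeasurable
    (ae_of_all _ hbound) (Continuous.intervalIntegrable (by fun_prop) 0 1)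
    (ae_of_all _ fun z _ x _ => hderiv x z)).2

theorem continuous_expSqIntegral (hg : Continuous g) : Continuous (expSqIntegral g) :=
  continuous_iff_continuousAt.2 fun η => (hasDerivAt_expSqIntegral hg η).continuousAt

theorem expSqIntegral_sub_const_mul (hg : Continuous g) (hh : Continuous h) (c η : ℝ) :
    expSqIntegral (fun z => g z - c * h z) η = expSqIntegral g η - c * expSqIntegral h η := by
  rw [expSqIntegral, expSqIntegral, expSqIntegral, ← intervalIntegral.integral_const_mul,
    ← intervalIntegral.integral_sub (intervalIntegrable_mul_exp_sq hg η)
      ((intervalIntegrable_mul_exp_sq hh η).const_mul c)]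
  congr 1 with z
  ring

theorem expSqIntegral_const_mul (c η : ℝ) :
    expSqIntegral (fun z => c * g z) η = c * expSqIntegral g η := by
  rw [expSqIntegral, expSqIntegral, ← intervalIntegral.integral_const_mul]
  congr 1 with z
  ring

theorem expSqIntegral_pos (hg : Continuous g) (hg₀ : ∀ z ∈ Ioc (0:ℝ) 1, 0 ≤ g z)
    (hpos : ∃ z ∈ Icc (0:ℝ) 1, 0 < g z) (η : ℝ) : 0 < expSqIntegral g η := by
  obtain ⟨z, hz, hgz⟩ := hpos
  exact intervalIntegral.integral_pos zero_lt_one (Continuous.continuousOn (by fun_prop))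
    (fun t ht => mul_nonneg (hg₀ t ht) (exp_pos _).le) ⟨z, hz, mul_pos hgz (exp_pos _)⟩

theorem hasDerivAt_exp_mul_expSqIntegral (hg : Continuous g) (s η : ℝ) :
    HasDerivAt (fun x => exp (-s * x) * expSqIntegral g x)
      (exp (-s * η) * expSqIntegral (fun z => (z ^ 2 - s) * g z) η) η := by
  have hexp : HasDerivAt (fun x => exp (-s * x)) (exp (-s * η) * -s) η :=
    (hasDerivAt_const_mul (-s)).exp
  refine (hexp.mul (hasDerivAt_expSqIntegral hg η)).congr_deriv ?_
  simp_rw [sub_mul]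
  rw [expSqIntegral_sub_const_mul (by fun_prop) hg]
  ring

theorem expSqIntegral_zero (g : ℝ → ℝ) : expSqIntegral g 0 = ∫ z in (0:ℝ)..1, g z := by
  simp only [expSqIntegral, zero_mul, exp_zero, mul_one]

end expSqIntegral

theorem lt_max_of_hasDerivAt_mul_strictMono {Q P u : ℝ → ℝ}
    (hQ : ∀ x, HasDerivAt Q (u x * P x) x) (hu : ∀ x, 0 < u x) (hP : StrictMono P)
    {x y z : ℝ} (hxy : x < y) (hyz : y < z) : Q y < max (Q x) (Q z) := by
  have hQc : Continuous Q := continuous_iff_continuousAt.2 fun t => (hQ t).continuousAt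
  rcases le_or_gt 0 (P y) with hPy | hPy
  · have hmono : StrictMonoOn Q (Icc y z) :=
      strictMonoOn_of_hasDerivWithinAt_pos (convex_Icc y z) hQc.continuousOn
        (fun t _ => (hQ t).hasDerivWithinAt) fun t ht => by
          rw [interior_Icc] at ht
          exact mul_pos (hu t) (hPy.trans_lt (hP ht.1))
    exact lt_max_of_lt_right (hmono (left_mem_Icc.2 hyz.le) (right_mem_Icc.2 hyz.le) hyz)
  · have hanti : StrictAntiOn Q (Icc x y) :=
      strictAntiOn_of_hasDerivWithinAt_neg (convex_Icc x y) hQc.continuousOn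
        (fun t _ => (hQ t).hasDerivWithinAt) fun t ht => by
          rw [interior_Icc] at ht
          exact mul_neg_of_pos_of_neg (hu t) ((hP ht.2).trans hPy)
    exact lt_max_of_lt_left (hanti (left_mem_Icc.2 hxy.le) (right_mem_Icc.2 hxy.le) hxy)

theorem exp_mul_expSqIntegral_quadratic_lt_max {a b : ℝ} (ha : a ≠ 1) (hb : b ≠ 1)
    {x y z : ℝ} (hxy : x < y) (hyz : y < z) :
    exp (-a * y) * expSqIntegral (fun t => (t ^ 2 - a) * (t ^ 2 - b)) y <
      max (exp (-a * x) * expSqIntegral (fun t => (t ^ 2 - a) * (t ^ 2 - b)) x)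
        (exp (-a * z) * expSqIntegral (fun t => (t ^ 2 - a) * (t ^ 2 - b)) z) := by
  set G := expSqIntegral fun t => (t ^ 2 - a) * ((t ^ 2 - a) * (t ^ 2 - b))
  have hP : StrictMono fun η => exp (-b * η) * G η := by
    refine strictMono_of_hasDerivAt_pos
      (fun η => hasDerivAt_exp_mul_expSqIntegral (by fun_prop) b η) fun η => ?_
    refine mul_pos (exp_pos _) (expSqIntegral_pos (by fun_prop) (fun t _ => ?_) ⟨1, ?_⟩ η)
    · nlinarith [sq_nonneg ((t ^ 2 - a) * (t ^ 2 - b))]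
    · refine ⟨right_mem_Icc.2 zero_le_one, ?_⟩
      have : (1 - a) * (1 - b) ≠ 0 := mul_ne_zero (sub_ne_zero.2 ha.symm) (sub_ne_zero.2 hb.symm)
      nlinarith [sq_pos_of_ne_zero this]
  refine lt_max_of_hasDerivAt_mul_strictMono (u := fun η => exp ((b - a) * η))
    (fun η => (hasDerivAt_exp_mul_expSqIntegral (by fun_prop) a η).congr_deriv ?_)
    (fun η => exp_pos _) hP hxy hyz
  rw [← mul_assoc, ← exp_add, show (b - a) * η + -b * η = -a * η by ring]

theorem phi_eq_div (η : ℝ) :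
    phi η = expSqIntegral (fun _ => 1) η / expSqIntegral (fun z => z ^ 2 * (1 - z ^ 2)) η := by
  simp only [phi, expSqIntegral, one_mul]

theorem expSqIntegral_denominator_pos (η : ℝ) :
    0 < expSqIntegral (fun z => z ^ 2 * (1 - z ^ 2)) η :=
  expSqIntegral_pos (by fun_prop)
    (fun z hz => mul_nonneg (sq_nonneg z) (by nlinarith [hz.1, hz.2]))
    ⟨1 / 2, by norm_num, by norm_num⟩ η

theorem continuous_phi : Continuous phi := by
  simp only [funext phi_eq_div]
  exact (continuous_expSqIntegral continuous_const).div
    (continuous_expSqIntegral (by fun_prop)) fun η => (expSqIntegral_denominator_pos η).ne'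

theorem expSqIntegral_one_sub_mul_weight (c η : ℝ) :
    expSqIntegral (fun z => 1 - c * (z ^ 2 * (1 - z ^ 2))) η =
      expSqIntegral (fun _ => 1) η - c * expSqIntegral (fun z => z ^ 2 * (1 - z ^ 2)) η :=
  expSqIntegral_sub_const_mul continuous_const (by fun_prop) c η

theorem phi_le_iff {c η : ℝ} :
    phi η ≤ c ↔ expSqIntegral (fun z => 1 - c * (z ^ 2 * (1 - z ^ 2))) η ≤ 0 := by
  rw [phi_eq_div, div_le_iff₀ (expSqIntegral_denominator_pos η), expSqIntegral_one_sub_mul_weight,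
    sub_nonpos]

theorem phi_lt_iff {c η : ℝ} :
    phi η < c ↔ expSqIntegral (fun z => 1 - c * (z ^ 2 * (1 - z ^ 2))) η < 0 := by
  rw [phi_eq_div, div_lt_iff₀ (expSqIntegral_denominator_pos η), expSqIntegral_one_sub_mul_weight,
    sub_neg]

theorem four_lt_phi (η : ℝ) : 4 < phi η := by
  rw [← not_le, phi_le_iff, not_le]
  have hsq : (fun z : ℝ => 1 - 4 * (z ^ 2 * (1 - z ^ 2))) = fun z => (1 - 2 * z ^ 2) ^ 2 :=
    funext fun z => by ring
  rw [hsq]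
  exact expSqIntegral_pos (by fun_prop) (fun z _ => sq_nonneg _) ⟨0, by norm_num, by norm_num⟩ η

theorem exists_factorization_one_sub_mul {c : ℝ} (hc : 4 < c) :
    ∃ a b : ℝ, a ≠ 1 ∧ b ≠ 1 ∧ ∀ t, 1 - c * (t * (1 - t)) = c * ((t - a) * (t - b)) := by
  set r := √(1 - 4 / c)
  have hr : r ^ 2 = 1 - 4 / c := sq_sqrt (by rw [sub_nonneg, div_le_one (by linarith)]; linarith)
  refine ⟨(1 - r) / 2, (1 + r) / 2, ?_, ?_, fun t => ?_⟩
  · nlinarith [sqrt_nonneg (1 - 4 / c)]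
  · intro h
    have : 4 / c = 0 := by nlinarith
    exact (div_pos four_pos (by linarith)).ne' this
  · have : c * (4 / c) = 4 := mul_div_cancel₀ 4 (by linarith)
    linear_combination (c / 4) * hr - this / 4

theorem phi_lt_max {x y z : ℝ} (hxy : x < y) (hyz : y < z) : phi y < max (phi x) (phi z) := by
  set c := max (phi x) (phi z)
  have hc : 4 < c := (four_lt_phi x).trans_le (le_max_left _ _)
  obtain ⟨a, b, ha, hb, hfac⟩ := exists_factorization_one_sub_mul hc
  have hnum (η : ℝ) : expSqIntegral (fun z => 1 - c * (z ^ 2 * (1 - z ^ 2))) η =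
      c * exp (a * η) *
        (exp (-a * η) * expSqIntegral (fun t => (t ^ 2 - a) * (t ^ 2 - b)) η) := by
    simp only [hfac, expSqIntegral_const_mul]
    rw [← mul_assoc, mul_assoc c, ← exp_add, show a * η + -a * η = 0 by ring, exp_zero, mul_one]
  have hpos (η : ℝ) : 0 < c * exp (a * η) := mul_pos (by linarith) (exp_pos _)
  have hle {η : ℝ} (h : phi η ≤ c) :
      exp (-a * η) * expSqIntegral (fun t => (t ^ 2 - a) * (t ^ 2 - b)) η ≤ 0 :=
    nonpos_of_mul_nonpos_right ((hnum η).symm.trans_le (phi_le_iff.1 h)) (hpos η)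
  rw [phi_lt_iff, hnum]
  exact mul_neg_of_pos_of_neg (hpos y)
    ((exp_mul_expSqIntegral_quadratic_lt_max ha hb hxy hyz).trans_le
      (max_le (hle (le_max_left _ _)) (hle (le_max_right _ _))))

theorem exists_gt_lt_of_hasDerivAt_neg {f : ℝ → ℝ} {f' x : ℝ} (hf : HasDerivAt f f' x)
    (hf' : f' < 0) : ∃ y, x < y ∧ f y < f x := by
  obtain ⟨y, hslope, hy⟩ :=
    ((hf.hasDerivWithinAt.liminf_right_slope_le hf').and_eventually self_mem_nhdsWithin).exists
  refine ⟨y, hy, ?_⟩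
  rw [slope_def_field, div_neg_iff] at hslope
  rcases hslope with ⟨-, h⟩ | ⟨h, -⟩ <;> linarith

theorem lt_of_forall_le_of_lt_max {f : ℝ → ℝ}
    (hf : ∀ x y z, x < y → y < z → f y < max (f x) (f z)) {x₀ : ℝ} (hmin : ∀ y, f x₀ ≤ f y)
    {x : ℝ} (hx : x ≠ x₀) : f x₀ < f x := by
  refine (hmin x).lt_of_ne fun heq => ?_
  have hmid := hmin ((x + x₀) / 2)
  rcases hx.lt_or_gt with h | h
  · have := hf x ((x + x₀) / 2) x₀ (by linarith) (by linarith)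
    rw [← heq, max_self] at this
    linarith
  · have := hf x₀ ((x + x₀) / 2) x (by linarith) (by linarith)
    rw [← heq, max_self] at this
    linarith

theorem integral_even_poly (p q r s : ℝ) :
    ∫ z in (0:ℝ)..1, (p + q * z ^ 2 + r * z ^ 4 + s * z ^ 6) = p + q / 3 + r / 5 + s / 7 := by
  have hmonomial (c : ℝ) (n : ℕ) : IntervalIntegrable (fun z : ℝ => c * z ^ n) volume 0 1 :=
    Continuous.intervalIntegrable (by fun_prop) _ _
  have hconst : IntervalIntegrable (fun _ : ℝ => p) volume 0 1 := intervalIntegrable_const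
  rw [intervalIntegral.integral_add ((hconst.add (hmonomial q 2)).add (hmonomial r 4))
      (hmonomial s 6),
    intervalIntegral.integral_add (hconst.add (hmonomial q 2)) (hmonomial r 4),
    intervalIntegral.integral_add hconst (hmonomial q 2)]
  norm_num [integral_pow]
  ring

theorem phi_zero : phi 0 = 15 / 2 := by
  have hden : expSqIntegral (fun z => z ^ 2 * (1 - z ^ 2)) 0 = 2 / 15 := by
    calc _ = ∫ z in (0:ℝ)..1, (0 + 1 * z ^ 2 + (-1) * z ^ 4 + 0 * z ^ 6) := by
          rw [expSqIntegral_zero]; congr 1 with z; ring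
      _ = 2 / 15 := by rw [integral_even_poly]; norm_num
  rw [phi_eq_div, hden, expSqIntegral_zero]
  norm_num

theorem exists_pos_phi_lt_fifteen_halves : ∃ δ, 0 < δ ∧ phi δ < 15 / 2 := by
  have hH : expSqIntegral (fun z => 1 - 15 / 2 * (z ^ 2 * (1 - z ^ 2))) 0 = 0 := by
    calc _ = ∫ z in (0:ℝ)..1, (1 + (-15 / 2) * z ^ 2 + 15 / 2 * z ^ 4 + 0 * z ^ 6) := by
          rw [expSqIntegral_zero]; congr 1 with z; ring
      _ = 0 := by rw [integral_even_poly]; norm_num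
  have hH' :
      HasDerivAt (expSqIntegral fun z => 1 - 15 / 2 * (z ^ 2 * (1 - z ^ 2))) (-2 / 21) 0 := by
    refine (hasDerivAt_expSqIntegral (by fun_prop) 0).congr_deriv ?_
    calc _ = ∫ z in (0:ℝ)..1, (0 + 1 * z ^ 2 + (-15 / 2) * z ^ 4 + 15 / 2 * z ^ 6) := by
          rw [expSqIntegral_zero]; congr 1 with z; ring
      _ = -2 / 21 := by rw [integral_even_poly]; norm_num
  obtain ⟨δ, hδ, hlt⟩ := exists_gt_lt_of_hasDerivAt_neg hH' (by norm_num)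
  exact ⟨δ, hδ, phi_lt_iff.2 (hlt.trans_eq hH)⟩

/-- The weight `1 - (15/2) z²(1 - z²)` is `≥ -1` everywhere and `≥ 0` once `z² ≥ 6/7`, so the
integral over `[0, 19/20]` is `≥ -e^{2400}`; on `[19/20, 1]` the weight is `≥ 1/3` and
`e^{2800 z²} ≥ e^{2527} = e^{127} e^{2400}`. -/
theorem fifteen_halves_le_phi_2800 : 15 / 2 ≤ phi 2800 := by
  rw [← not_lt, phi_lt_iff, not_lt]
  set w := fun z : ℝ => 1 - 15 / 2 * (z ^ 2 * (1 - z ^ 2))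
  have hcont : Continuous fun z => w z * exp (2800 * z ^ 2) := by fun_prop
  have hlow : -exp 2400 ≤ ∫ z in (0:ℝ)..19 / 20, w z * exp (2800 * z ^ 2) := by
    have hpt : ∀ z ∈ Icc (0:ℝ) (19 / 20), -exp 2400 ≤ w z * exp (2800 * z ^ 2) := by
      intro z hz
      have he := exp_pos (2800 * z ^ 2)
      rcases le_or_gt (z ^ 2) (6 / 7) with hz2 | hz2
      · have hE : exp (2800 * z ^ 2) ≤ exp 2400 := exp_le_exp.2 (by linarith)
        have hw : -1 ≤ w z := by simp only [w]; nlinarith [sq_nonneg (z ^ 2 - 1 / 2)]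
        nlinarith [mul_nonneg (neg_le_iff_add_nonneg.1 hw) he.le]
      · have hw : 0 ≤ w z := by
          simp only [w]
          nlinarith [mul_nonneg (sub_nonneg.2 hz2.le) (by linarith : (0:ℝ) ≤ z ^ 2 - 1 / 7)]
        nlinarith [exp_pos 2400]
    have := intervalIntegral.integral_mono_on (by norm_num)
      (intervalIntegrable_const (μ := volume)) (hcont.intervalIntegrable _ _) hpt
    rw [intervalIntegral.integral_const, smul_eq_mul] at this
    nlinarith [exp_pos 2400]
  have hhigh : exp 2527 / 60 ≤ ∫ z in (19 / 20:ℝ)..1, w z * exp (2800 * z ^ 2) := by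
    have hpt : ∀ z ∈ Icc (19 / 20:ℝ) 1, exp 2527 / 3 ≤ w z * exp (2800 * z ^ 2) := by
      intro z hz
      have hz2 : 361 / 400 ≤ z ^ 2 := by nlinarith [hz.1]
      have hE : exp 2527 ≤ exp (2800 * z ^ 2) := exp_le_exp.2 (by linarith)
      have hw : 1 / 3 ≤ w z := by
        simp only [w]
        nlinarith [mul_nonneg (sub_nonneg.2 hz2) (by linarith : (0:ℝ) ≤ z ^ 2 + 361 / 400 - 1)]
      nlinarith [exp_pos 2527]
    have := intervalIntegral.integral_mono_on (by norm_num)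
      (intervalIntegrable_const (μ := volume)) (hcont.intervalIntegrable _ _) hpt
    rw [intervalIntegral.integral_const, smul_eq_mul] at this
    linarith
  have hexp : 60 * exp 2400 ≤ exp 2527 := by
    rw [show (2527:ℝ) = 127 + 2400 by norm_num, exp_add]
    nlinarith [add_one_le_exp 127, exp_pos 2400]
  rw [expSqIntegral, ← intervalIntegral.integral_add_adjacent_intervals
    (hcont.intervalIntegrable 0 (19 / 20)) (hcont.intervalIntegrable _ 1)]
  linarith

/-- `φ(0) = 15/2`; the unique global minimizer `ηs` of `φ` is strictly positive, hence the
minimum value `φ ηs` is `< 15/2`, and the smaller of the two solutions of `φ η = 15/2`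
equals `0` (i.e. `0` is a solution and every solution is `≥ 0`). -/
theorem stmt1 :
    phi 0 = 15 / 2 ∧
    ∃ ηs : ℝ,
      (∀ η : ℝ, η ≠ ηs → phi ηs < phi η) ∧
      0 < ηs ∧
      phi ηs < 15 / 2 ∧
      (∀ η : ℝ, phi η = 15 / 2 → 0 ≤ η) := by
  obtain ⟨δ, hδ, hφδ⟩ := exists_pos_phi_lt_fifteen_halves
  have hsublevel : ∀ η, phi η ≤ 15 / 2 → η ∈ Icc 0 2800 := by
    intro η hη
    by_contra hout
    rcases not_and_or.1 hout with hneg | hlarge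
    · have := (phi_lt_max (not_le.1 hneg) hδ).trans_le (max_le hη hφδ.le)
      exact this.ne phi_zero
    · have := (phi_lt_max (by norm_num : (0:ℝ) < 2800) (not_le.1 hlarge)).trans_le
        (max_le phi_zero.le hη)
      exact this.not_ge fifteen_halves_le_phi_2800
  obtain ⟨ηs, hmin⟩ := continuous_phi.exists_forall_le_of_isBounded 0
    ((Metric.isBounded_Icc 0 2800).subset fun η hη => hsublevel η (hη.trans_eq phi_zero))
  have hφs : phi ηs < 15 / 2 := (hmin δ).trans_lt hφδ
  refine ⟨phi_zero, ηs, fun η => lt_of_forall_le_of_lt_max (fun _ _ _ => phi_lt_max) hmin,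
    ?_, hφs, fun η hη => (hsublevel η hη.le).1⟩
  refine (hsublevel ηs hφs.le).1.lt_of_ne ?_
  rintro rfl
  exact hφs.ne phi_zero
end
end

section
/- Assume 0 < a < b²/(27c) (so that b² − 24ac > 0). Then: (i) F_b(s₊ (n nᵀ − I/3)) < 0 and, for every Q ∈ 𝒬, F_b(Q) ≥ F_b(s₊ (n nᵀ − I/3)), with equality if and only if Q = s₊ (n nᵀ − I/3) for some unit vector n ∈ ℝ³; (ii) Q = 0 is a strict local minimizer of F_b on 𝒬 (but not a global minimizer); (iii) for any unit vector n, s₋ (n nᵀ − I/3) is not a local minimizer of F_b on 𝒬. -/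
open Real

noncomputable section

abbrev Mat3 : Type := Matrix (Fin 3) (Fin 3) ℝ

/-- The space 𝒬 of real symmetric traceless 3×3 matrices. -/
def QSet : Set Mat3 := {Q | Q.IsSymm ∧ Q.trace = 0}

/-- The Landau–de Gennes bulk energy
`F_b(Q) = (a/2) tr(Q²) − (b/3) tr(Q³) + (c/4) (tr(Q²))²`. -/
noncomputable def Fb (a b c : ℝ) (Q : Mat3) : ℝ :=
  a / 2 * (Q * Q).trace - b / 3 * (Q * Q * Q).trace + c / 4 * ((Q * Q).trace) ^ 2

/-- The uniaxial tensor `s (n nᵀ − I/3)`. -/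
noncomputable def uniQ (s : ℝ) (n : Fin 3 → ℝ) : Mat3 :=
  s • (Matrix.vecMulVec n n - (1 / 3 : ℝ) • (1 : Mat3))

/-- `s₊ = (b + √(b² − 24ac))/(4c)`. -/
noncomputable def splus (a b c : ℝ) : ℝ := (b + Real.sqrt (b ^ 2 - 24 * a * c)) / (4 * c)

/-- `s₋ = (b − √(b² − 24ac))/(4c)`. -/
noncomputable def sminus (a b c : ℝ) : ℝ := (b - Real.sqrt (b ^ 2 - 24 * a * c)) / (4 * c)

open Matrix Filter Topology

/-! For `Q ∈ 𝒬` with eigenvalues `λᵢ` (so `∑ λᵢ = 0`), put `S = √(3/2 · tr Q²)`, the scalar order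
parameter, so that `tr Q² = 2S²/3`. The discriminant identity
`(∑ λᵢ²)³ − 6 (∑ λᵢ³)² = 2 ((λ₁ − λ₂)(λ₂ − λ₃)(λ₃ − λ₁))²` gives `tr Q³ ≤ 2S³/9`, with equality
exactly for the uniaxial tensors `S (n nᵀ − I/3)`. Hence
`F_b(Q) = g(S) + (b/3)(2S³/9 − tr Q³) ≥ g(S)`, where `g(s) = F_b(s (n nᵀ − I/3))` is the quartic
`a s²/3 − 2b s³/27 + c s⁴/9`. Writing `b, a` through the critical points `s₊, s₋` of `g`,
`g(s) − g(s₊) = (c/9)(s − s₊)² q(s)` with `q` a quadratic whose discriminant has the sign of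
`27ac − b²`; so `s₊` is the strict global minimiser of `g`. The same factorisation at `s₋` has
`q(s₋) = 2 s₋ (s₋ − s₊) < 0`, so `g` drops on both sides of `s₋`. Finally `g > 0` on
`(0, 9a/(2b))`, which makes `Q = 0` a strict local minimiser. -/

section Uniaxial

lemma dotProduct_self_eq_one {ι : Type*} [Fintype ι] {n : ι → ℝ} (hn : ∑ i, n i ^ 2 = 1) :
    n ⬝ᵥ n = 1 := by
  simpa [dotProduct, sq] using hn

lemma vecMulVec_self_mul_self {ι : Type*} [Fintype ι] {n : ι → ℝ} (hn : ∑ i, n i ^ 2 = 1) :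
    vecMulVec n n * vecMulVec n n = vecMulVec n n := by
  rw [vecMulVec_mul_vecMulVec, dotProduct_self_eq_one hn, one_smul]

variable {n : Fin 3 → ℝ}

lemma uniQ_mem_QSet (s : ℝ) (hn : ∑ i, n i ^ 2 = 1) : uniQ s n ∈ QSet := by
  refine ⟨?_, ?_⟩
  · simp [IsSymm, uniQ, transpose_vecMulVec]
  · simp [uniQ, trace_sub, trace_vecMulVec, dotProduct_self_eq_one hn]

lemma uniQ_mul_self (s : ℝ) (hn : ∑ i, n i ^ 2 = 1) :
    uniQ s n * uniQ s n = (s ^ 2 / 3) • vecMulVec n n + (s ^ 2 / 9) • (1 : Mat3) := by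
  simp only [uniQ, Matrix.smul_mul, Matrix.mul_smul, sub_mul, mul_sub, Matrix.one_mul,
    Matrix.mul_one, smul_smul, vecMulVec_self_mul_self hn, smul_sub]
  module

lemma trace_uniQ_mul_self (s : ℝ) (hn : ∑ i, n i ^ 2 = 1) :
    (uniQ s n * uniQ s n).trace = 2 * s ^ 2 / 3 := by
  simp only [uniQ_mul_self s hn, trace_add, trace_smul, trace_vecMulVec,
    dotProduct_self_eq_one hn, smul_eq_mul, mul_one, trace_one, Fintype.card_fin, Nat.cast_ofNat]
  ring

lemma trace_uniQ_mul_self_mul_self (s : ℝ) (hn : ∑ i, n i ^ 2 = 1) :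
    (uniQ s n * uniQ s n * uniQ s n).trace = 2 * s ^ 3 / 9 := by
  have hcube : uniQ s n * uniQ s n * uniQ s n
      = (s ^ 3 / 3) • vecMulVec n n - (s ^ 3 / 27) • (1 : Mat3) := by
    rw [uniQ_mul_self s hn]
    simp only [uniQ, Matrix.smul_mul, Matrix.mul_smul, add_mul, mul_sub, Matrix.one_mul,
      Matrix.mul_one, smul_smul, vecMulVec_self_mul_self hn, smul_sub]
    module
  simp only [hcube, trace_sub, trace_smul, trace_vecMulVec, dotProduct_self_eq_one hn,
    smul_eq_mul, mul_one, trace_one, Fintype.card_fin, Nat.cast_ofNat]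
  ring

end Uniaxial

namespace Matrix.IsHermitian

variable {ι : Type*} [Fintype ι]

lemma trace_mul_self_pos {A : Matrix ι ι ℝ} (hA : A.IsHermitian) (h : A ≠ 0) :
    0 < (A * A).trace := by
  have hnonneg := (posSemidef_conjTranspose_mul_self A).trace_nonneg
  have hne := (trace_conjTranspose_mul_self_eq_zero_iff (A := A)).not.2 h
  rw [hA.eq] at hnonneg hne
  exact hnonneg.lt_of_ne' hne

variable [DecidableEq ι]

lemma trace_pow_eq_sum_eigenvalues_pow {𝕜 : Type*} [RCLike 𝕜]
    {A : Matrix ι ι 𝕜} (hA : A.IsHermitian) (k : ℕ) :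
    (A ^ k).trace = ∑ i, (hA.eigenvalues i : 𝕜) ^ k := by
  conv_lhs => rw [hA.spectral_theorem, ← map_pow, Unitary.conjStarAlgAut_apply, trace_mul_cycle,
    Unitary.coe_star_mul_self, one_mul, diagonal_pow, trace_diagonal]
  rfl

lemma sum_eigenvalues {A : Matrix ι ι ℝ} (hA : A.IsHermitian) :
    ∑ i, hA.eigenvalues i = A.trace := by
  simpa using hA.trace_eq_sum_eigenvalues.symm

lemma trace_mul_self {A : Matrix ι ι ℝ} (hA : A.IsHermitian) :
    (A * A).trace = ∑ i, hA.eigenvalues i ^ 2 := by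
  simpa [sq] using hA.trace_pow_eq_sum_eigenvalues_pow 2

lemma trace_mul_self_mul_self {A : Matrix ι ι ℝ} (hA : A.IsHermitian) :
    (A * A * A).trace = ∑ i, hA.eigenvalues i ^ 3 := by
  simpa [pow_three'] using hA.trace_pow_eq_sum_eigenvalues_pow 3

lemma eq_smul_vecMulVec_add_smul_one {A : Matrix ι ι ℝ}
    (hA : A.IsHermitian) {s t : ℝ} {i₀ : ι} (h : ∀ j, hA.eigenvalues j = if j = i₀ then s else t) :
    A = (s - t) • vecMulVec ⇑(hA.eigenvectorBasis i₀) ⇑(hA.eigenvectorBasis i₀) + t • 1 := by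
  have hD : diagonal (RCLike.ofReal ∘ hA.eigenvalues)
      = (s - t) • diagonal (Pi.single i₀ 1) + t • (1 : Matrix ι ι ℝ) := by
    ext i j
    by_cases hij : i = j
    · subst hij; by_cases hi : i = i₀ <;> simp [h, hi]
    · simp [hij]
  conv_lhs => rw [hA.spectral_theorem, hD, map_add, map_smul, map_smul, map_one,
    Unitary.conjStarAlgAut_apply, diagonal_single, single_eq_single_vecMulVec_single,
    mul_vecMulVec, vecMulVec_mul, mulVec_single_one, single_one_vecMul]
  rfl

lemma sum_eigenvectorBasis_sq {A : Matrix ι ι ℝ} (hA : A.IsHermitian) (i : ι) :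
    ∑ j, hA.eigenvectorBasis i j ^ 2 = 1 := by
  have h := hA.eigenvectorBasis.orthonormal.1 i
  rw [EuclideanSpace.norm_eq, Real.sqrt_eq_one] at h
  simpa using h

end Matrix.IsHermitian

section PowerSums

lemma six_mul_sum_cube_sq_le {x : Fin 3 → ℝ} (h1 : ∑ i, x i = 0) :
    6 * (∑ i, x i ^ 3) ^ 2 ≤ (∑ i, x i ^ 2) ^ 3 := by
  simp only [Fin.sum_univ_three] at *
  have hdisc : (x 0 ^ 2 + x 1 ^ 2 + x 2 ^ 2) ^ 3 - 6 * (x 0 ^ 3 + x 1 ^ 3 + x 2 ^ 3) ^ 2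
      = 2 * ((x 0 - x 1) * (x 1 - x 2) * (x 2 - x 0)) ^ 2 := by
    rw [show x 2 = -x 0 - x 1 by linarith]
    ring
  linarith [sq_nonneg ((x 0 - x 1) * (x 1 - x 2) * (x 2 - x 0))]

/-- The power sums force `x` to be a root of `(t - 2s/3)(t + s/3)²`. -/
lemma eq_or_eq_of_power_sums {x y z s : ℝ} (h1 : x + y + z = 0)
    (h2 : x ^ 2 + y ^ 2 + z ^ 2 = 2 * s ^ 2 / 3) (h3 : x ^ 3 + y ^ 3 + z ^ 3 = 2 * s ^ 3 / 9) :
    x = 2 * s / 3 ∨ x = -s / 3 := by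
  obtain rfl : z = -x - y := by linarith
  have hroot : (x - 2 * s / 3) * (x + s / 3) ^ 2 = 0 := by
    linear_combination (x / 2) * h2 + (1 / 3) * h3
  rcases mul_eq_zero.1 hroot with h | h
  · left; linarith
  · right; linarith [pow_eq_zero_iff two_ne_zero |>.1 h]

lemma exists_eq_ite_of_power_sums {x : Fin 3 → ℝ} {s : ℝ} (hs : 0 < s) (h1 : ∑ i, x i = 0)
    (h2 : ∑ i, x i ^ 2 = 2 * s ^ 2 / 3) (h3 : ∑ i, x i ^ 3 = 2 * s ^ 3 / 9) :
    ∃ i₀, ∀ j, x j = if j = i₀ then 2 * s / 3 else -s / 3 := by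
  have h1' := h1; have h2' := h2; have h3' := h3
  simp only [Fin.sum_univ_three] at h1' h2' h3'
  have hroot : ∀ j, x j = 2 * s / 3 ∨ x j = -s / 3 := by
    intro j
    match j with
    | 0 => exact eq_or_eq_of_power_sums h1' h2' h3'
    | 1 =>
      exact eq_or_eq_of_power_sums (y := x 2) (z := x 0) (by linarith) (by linarith) (by linarith)
    | 2 =>
      exact eq_or_eq_of_power_sums (y := x 0) (z := x 1) (by linarith) (by linarith) (by linarith)
  obtain ⟨i₀, hi₀⟩ : ∃ i₀, x i₀ = 2 * s / 3 := by
    by_contra! hne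
    have hall : ∀ j, x j = -s / 3 := fun j => (hroot j).resolve_left (hne j)
    rw [hall, hall, hall] at h1'
    linarith
  refine ⟨i₀, fun j => ?_⟩
  split_ifs with hj
  · rw [hj, hi₀]
  · refine (hroot j).resolve_left fun hxj => ?_
    have hpair := Finset.sum_le_sum_of_subset_of_nonneg (Finset.subset_univ {i₀, j})
      fun k _ _ => sq_nonneg (x k)
    rw [Finset.sum_pair (Ne.symm hj), hi₀, hxj, h2] at hpair
    nlinarith

end PowerSums

section Traceless

/-- The scalar order parameter: `tr (uniQ s n)² = 2 s² / 3`, so this recovers `|s|`. -/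
def scalarOrder (Q : Mat3) : ℝ := √(3 / 2 * (Q * Q).trace)

lemma continuous_scalarOrder : Continuous scalarOrder := by
  unfold scalarOrder
  fun_prop

variable {Q : Mat3}

lemma isHermitian_of_mem_QSet (hQ : Q ∈ QSet) : Q.IsHermitian :=
  isHermitian_iff_isSymm.2 hQ.1

lemma trace_mul_self_eq_scalarOrder (hQ : Q ∈ QSet) :
    (Q * Q).trace = 2 * scalarOrder Q ^ 2 / 3 := by
  have hH := isHermitian_of_mem_QSet hQ
  have hnonneg : 0 ≤ (Q * Q).trace := by rw [hH.trace_mul_self]; positivity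
  rw [scalarOrder, Real.sq_sqrt (by positivity)]
  ring

lemma scalarOrder_pos (hQ : Q ∈ QSet) (hQ0 : Q ≠ 0) : 0 < scalarOrder Q :=
  Real.sqrt_pos.2 (by have := (isHermitian_of_mem_QSet hQ).trace_mul_self_pos hQ0; positivity)

lemma trace_cube_le_scalarOrder (hQ : Q ∈ QSet) :
    (Q * Q * Q).trace ≤ 2 * scalarOrder Q ^ 3 / 9 := by
  have hH := isHermitian_of_mem_QSet hQ
  have h6 := six_mul_sum_cube_sq_le (hH.sum_eigenvalues.trans hQ.2)
  rw [← hH.trace_mul_self, ← hH.trace_mul_self_mul_self, trace_mul_self_eq_scalarOrder hQ] at h6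
  have hS : 0 ≤ scalarOrder Q := Real.sqrt_nonneg _
  exact (abs_le_of_sq_le_sq' (by nlinarith) (by positivity)).2

lemma exists_eq_uniQ_of_traces (hQ : Q ∈ QSet) {s : ℝ} (hs : 0 < s)
    (h2 : (Q * Q).trace = 2 * s ^ 2 / 3) (h3 : (Q * Q * Q).trace = 2 * s ^ 3 / 9) :
    ∃ n : Fin 3 → ℝ, (∑ i, n i ^ 2 = 1) ∧ Q = uniQ s n := by
  have hH := isHermitian_of_mem_QSet hQ
  obtain ⟨i₀, hi₀⟩ := exists_eq_ite_of_power_sums hs (hH.sum_eigenvalues.trans hQ.2)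
    (hH.trace_mul_self ▸ h2) (hH.trace_mul_self_mul_self ▸ h3)
  refine ⟨_, hH.sum_eigenvectorBasis_sq i₀, ?_⟩
  refine (hH.eq_smul_vecMulVec_add_smul_one hi₀).trans ?_
  rw [uniQ]
  module

end Traceless

section Energy

def uniaxialEnergy (a b c s : ℝ) : ℝ := a / 3 * s ^ 2 - 2 * b / 27 * s ^ 3 + c / 9 * s ^ 4

variable {a b c : ℝ}

lemma Fb_uniQ (s : ℝ) {n : Fin 3 → ℝ} (hn : ∑ i, n i ^ 2 = 1) :
    Fb a b c (uniQ s n) = uniaxialEnergy a b c s := by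
  rw [Fb, trace_uniQ_mul_self s hn, trace_uniQ_mul_self_mul_self s hn, uniaxialEnergy]
  ring

lemma Fb_zero : Fb a b c 0 = 0 := by simp [Fb]

lemma Fb_eq_uniaxialEnergy_scalarOrder_add {Q : Mat3} (hQ : Q ∈ QSet) :
    Fb a b c Q = uniaxialEnergy a b c (scalarOrder Q)
      + b / 3 * (2 * scalarOrder Q ^ 3 / 9 - (Q * Q * Q).trace) := by
  rw [Fb, trace_mul_self_eq_scalarOrder hQ, uniaxialEnergy]
  ring

lemma uniaxialEnergy_scalarOrder_le_Fb (hb : 0 ≤ b) {Q : Mat3} (hQ : Q ∈ QSet) :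
    uniaxialEnergy a b c (scalarOrder Q) ≤ Fb a b c Q := by
  rw [Fb_eq_uniaxialEnergy_scalarOrder_add hQ]
  have := trace_cube_le_scalarOrder hQ
  have : 0 ≤ b / 3 * (2 * scalarOrder Q ^ 3 / 9 - (Q * Q * Q).trace) := by
    apply mul_nonneg <;> linarith
  linarith

lemma uniaxialEnergy_pos (hc : 0 ≤ c) {s : ℝ} (hs : 0 < s) (hsb : 2 * b * s < 9 * a) :
    0 < uniaxialEnergy a b c s := by
  have hsplit : uniaxialEnergy a b c s = s ^ 2 / 27 * (9 * a - 2 * b * s) + c / 9 * s ^ 4 := by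
    rw [uniaxialEnergy]; ring
  have := sub_pos.2 hsb
  rw [hsplit]
  positivity

/-- `g(s) − g(u)` when `u, v` are the nonzero critical points of `g`, i.e. the roots of
`2c s² − b s + 3a`. -/
lemma uniaxialEnergy_sub_uniaxialEnergy {u v : ℝ} (hc : c ≠ 0) (hsum : u + v = b / (2 * c))
    (hprod : u * v = 3 * a / (2 * c)) (s : ℝ) :
    uniaxialEnergy a b c s - uniaxialEnergy a b c u
      = c / 9 * (s - u) ^ 2 * ((s + (u - 2 * v) / 3) ^ 2 + 2 * (u - 2 * v) * (u + v) / 9) := by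
  obtain rfl : b = 2 * c * (u + v) := by field_simp at hsum; linarith
  obtain rfl : a = 2 * c * u * v / 3 := by field_simp at hprod; linarith
  rw [uniaxialEnergy, uniaxialEnergy]
  ring

end Energy

section CriticalPoints

variable {a b c : ℝ}

lemma splus_add_sminus (hc : c ≠ 0) : splus a b c + sminus a b c = b / (2 * c) := by
  rw [splus, sminus]
  field_simp
  ring

lemma splus_mul_sminus (hc : c ≠ 0) (hD : 0 ≤ b ^ 2 - 24 * a * c) :
    splus a b c * sminus a b c = 3 * a / (2 * c) := by
  rw [splus, sminus]
  field_simp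
  linear_combination (-2 : ℝ) * Real.sq_sqrt hD

lemma splus_pos (hb : 0 < b) (hc : 0 < c) : 0 < splus a b c :=
  div_pos (add_pos_of_pos_of_nonneg hb (Real.sqrt_nonneg _)) (by positivity)

lemma sminus_pos (ha : 0 < a) (hb : 0 < b) (hc : 0 < c) : 0 < sminus a b c := by
  have : √(b ^ 2 - 24 * a * c) < b := (Real.sqrt_lt' hb).2 (by nlinarith)
  exact div_pos (by linarith) (by positivity)

lemma sminus_lt_splus (hc : 0 < c) (hD : 0 < b ^ 2 - 24 * a * c) : sminus a b c < splus a b c := by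
  have := Real.sqrt_pos.2 hD
  rw [splus, sminus]
  gcongr
  linarith

lemma two_mul_sminus_lt_splus (hb : 0 < b) (hc : 0 < c) (h27 : 27 * a * c < b ^ 2) :
    2 * sminus a b c < splus a b c := by
  have : b / 3 < √(b ^ 2 - 24 * a * c) := (Real.lt_sqrt (by positivity)).2 (by nlinarith)
  rw [splus, sminus, ← mul_div_assoc]
  gcongr
  linarith

lemma uniaxialEnergy_splus_lt (hb : 0 < b) (hc : 0 < c) (h27 : 27 * a * c < b ^ 2) {s : ℝ}
    (hs : s ≠ splus a b c) : uniaxialEnergy a b c (splus a b c) < uniaxialEnergy a b c s := by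
  have hD : 0 ≤ b ^ 2 - 24 * a * c := by nlinarith
  have hfactor := uniaxialEnergy_sub_uniaxialEnergy hc.ne' (splus_add_sminus hc.ne')
    (splus_mul_sminus hc.ne' hD) s
  have hgap := sub_pos.2 (two_mul_sminus_lt_splus hb hc h27)
  have hsum : 0 < splus a b c + sminus a b c := by rw [splus_add_sminus hc.ne']; positivity
  have hne : s - splus a b c ≠ 0 := sub_ne_zero.2 hs
  have hsq : 0 < (s - splus a b c) ^ 2 := by positivity
  have hquad : 0 < (s + (splus a b c - 2 * sminus a b c) / 3) ^ 2
      + 2 * (splus a b c - 2 * sminus a b c) * (splus a b c + sminus a b c) / 9 := by positivity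
  nlinarith [mul_pos (mul_pos (by positivity : (0 : ℝ) < c / 9) hsq) hquad]

lemma uniaxialEnergy_splus_neg (hb : 0 < b) (hc : 0 < c) (h27 : 27 * a * c < b ^ 2) :
    uniaxialEnergy a b c (splus a b c) < 0 := by
  simpa [uniaxialEnergy] using uniaxialEnergy_splus_lt hb hc h27 (splus_pos hb hc).ne

lemma eventually_uniaxialEnergy_lt_sminus (ha : 0 < a) (hb : 0 < b) (hc : 0 < c)
    (hD : 0 < b ^ 2 - 24 * a * c) :
    ∀ᶠ s in 𝓝[≠] sminus a b c, uniaxialEnergy a b c s < uniaxialEnergy a b c (sminus a b c) := by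
  set u := sminus a b c
  set v := splus a b c
  have hfactor := uniaxialEnergy_sub_uniaxialEnergy (u := u) (v := v) hc.ne'
    (by rw [add_comm]; exact splus_add_sminus hc.ne')
    (by rw [mul_comm]; exact splus_mul_sminus hc.ne' hD.le)
  set q : ℝ → ℝ := fun s => (s + (u - 2 * v) / 3) ^ 2 + 2 * (u - 2 * v) * (u + v) / 9
  have hqu : q u < 0 := by
    have hq : q u = 2 * u * (u - v) := by ring
    rw [hq]
    exact mul_neg_of_pos_of_neg (by linarith [sminus_pos ha hb hc])
      (sub_neg.2 (sminus_lt_splus hc hD))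
  have hq : ∀ᶠ s in 𝓝 u, q s < 0 :=
    (show Continuous q by fun_prop).continuousAt.eventually_lt continuousAt_const hqu
  filter_upwards [nhdsWithin_le_nhds hq, self_mem_nhdsWithin] with s hqs hsu
  have hsq : 0 < (s - u) ^ 2 := by
    have : s - u ≠ 0 := sub_ne_zero.2 hsu
    positivity
  have hs : uniaxialEnergy a b c s - uniaxialEnergy a b c u = c / 9 * (s - u) ^ 2 * q s := hfactor s
  linarith [mul_neg_of_pos_of_neg (mul_pos (by positivity : (0 : ℝ) < c / 9) hsq) hqs]

lemma not_isLocalMin_uniaxialEnergy_sminus (ha : 0 < a) (hb : 0 < b) (hc : 0 < c)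
    (hD : 0 < b ^ 2 - 24 * a * c) : ¬ IsLocalMin (uniaxialEnergy a b c) (sminus a b c) := by
  intro hmin
  obtain ⟨s, hle, hlt⟩ := ((hmin.filter_mono nhdsWithin_le_nhds).and
    (eventually_uniaxialEnergy_lt_sminus ha hb hc hD)).exists
  exact hlt.not_ge hle

end CriticalPoints

section Minimizers

variable {a b c : ℝ}

lemma uniaxialEnergy_splus_le (hb : 0 < b) (hc : 0 < c) (h27 : 27 * a * c < b ^ 2) (s : ℝ) :
    uniaxialEnergy a b c (splus a b c) ≤ uniaxialEnergy a b c s := by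
  rcases eq_or_ne s (splus a b c) with rfl | hs
  · rfl
  · exact (uniaxialEnergy_splus_lt hb hc h27 hs).le

lemma uniaxialEnergy_splus_le_Fb (hb : 0 < b) (hc : 0 < c) (h27 : 27 * a * c < b ^ 2)
    {Q : Mat3} (hQ : Q ∈ QSet) : uniaxialEnergy a b c (splus a b c) ≤ Fb a b c Q :=
  (uniaxialEnergy_splus_le hb hc h27 _).trans (uniaxialEnergy_scalarOrder_le_Fb hb.le hQ)

lemma exists_eq_uniQ_splus_of_Fb_eq (hb : 0 < b) (hc : 0 < c) (h27 : 27 * a * c < b ^ 2)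
    {Q : Mat3} (hQ : Q ∈ QSet) (h : Fb a b c Q = uniaxialEnergy a b c (splus a b c)) :
    ∃ n : Fin 3 → ℝ, (∑ i, n i ^ 2 = 1) ∧ Q = uniQ (splus a b c) n := by
  have hS : scalarOrder Q = splus a b c := by
    by_contra hne
    have := uniaxialEnergy_splus_lt hb hc h27 hne
    have := uniaxialEnergy_scalarOrder_le_Fb (a := a) (c := c) hb.le hQ
    linarith
  have h3 : (Q * Q * Q).trace = 2 * splus a b c ^ 3 / 9 := by
    have hsplit := Fb_eq_uniaxialEnergy_scalarOrder_add (a := a) (b := b) (c := c) hQ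
    rw [h, hS] at hsplit
    have hzero : b / 3 * (2 * splus a b c ^ 3 / 9 - (Q * Q * Q).trace) = 0 := by linarith
    linarith [(mul_eq_zero.1 hzero).resolve_left (by positivity)]
  exact exists_eq_uniQ_of_traces hQ (splus_pos hb hc)
    (by rw [trace_mul_self_eq_scalarOrder hQ, hS]) h3

lemma exists_nhds_Fb_zero_lt (ha : 0 < a) (hb : 0 < b) (hc : 0 ≤ c) :
    ∃ U ∈ 𝓝 (0 : Mat3), ∀ Q ∈ U ∩ QSet, Q ≠ 0 → Fb a b c 0 < Fb a b c Q := by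
  refine ⟨scalarOrder ⁻¹' Set.Iio (9 * a / (2 * b)),
    continuous_scalarOrder.continuousAt.preimage_mem_nhds (Iio_mem_nhds ?_), ?_⟩
  · simp only [scalarOrder, mul_zero, trace_zero, Real.sqrt_zero]
    positivity
  rintro Q ⟨hU, hQ⟩ hQ0
  have hSb : 2 * b * scalarOrder Q < 9 * a := by
    have : scalarOrder Q < 9 * a / (2 * b) := hU
    rw [lt_div_iff₀ (by positivity)] at this
    linarith
  rw [Fb_zero]
  exact (uniaxialEnergy_pos hc (scalarOrder_pos hQ hQ0) hSb).trans_le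
    (uniaxialEnergy_scalarOrder_le_Fb hb.le hQ)

lemma isLocalMin_uniaxialEnergy_of_isLocalMinOn {s : ℝ} {n : Fin 3 → ℝ} (hn : ∑ i, n i ^ 2 = 1)
    (h : IsLocalMinOn (Fb a b c) QSet (uniQ s n)) : IsLocalMin (uniaxialEnergy a b c) s := by
  have hcurve : Tendsto (uniQ · n) (𝓝 s) (𝓝[QSet] (uniQ s n)) :=
    tendsto_nhdsWithin_iff.2 ⟨(show Continuous (uniQ · n) by unfold uniQ; fun_prop).tendsto s,
      Eventually.of_forall fun t => uniQ_mem_QSet t hn⟩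
  have hcomp : Fb a b c ∘ (uniQ · n) = uniaxialEnergy a b c := funext fun t => Fb_uniQ t hn
  have hmin := IsMinFilter.comp_tendsto (g := (uniQ · n)) h hcurve
  rwa [hcomp] at hmin

end Minimizers

/-- For `0 < a < b²/(27c)`: (i) `F_b(s₊ (n nᵀ − I/3)) < 0` and `F_b` is minimized over 𝒬
exactly at the tensors `s₊ (n nᵀ − I/3)`; (ii) `Q = 0` is a strict local minimizer of
`F_b` on 𝒬 but not a global one; (iii) no `s₋ (n nᵀ − I/3)` is a local minimizer of
`F_b` on 𝒬. -/
theorem stmt10 (a b c : ℝ) (hb : 0 < b) (hc : 0 < c)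
    (ha0 : 0 < a) (ha : a < b ^ 2 / (27 * c)) :
    (∀ n : Fin 3 → ℝ, (∑ i, (n i) ^ 2 = 1) →
      Fb a b c (uniQ (splus a b c) n) < 0 ∧
      (∀ Q ∈ QSet, Fb a b c (uniQ (splus a b c) n) ≤ Fb a b c Q) ∧
      (∀ Q ∈ QSet, Fb a b c Q = Fb a b c (uniQ (splus a b c) n) ↔
        ∃ n' : Fin 3 → ℝ, (∑ i, (n' i) ^ 2 = 1) ∧ Q = uniQ (splus a b c) n')) ∧
    ((∃ U ∈ nhds (0 : Mat3), ∀ Q ∈ U ∩ QSet, Q ≠ 0 → Fb a b c 0 < Fb a b c Q) ∧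
      ∃ Q ∈ QSet, Fb a b c Q < Fb a b c 0) ∧
    (∀ n : Fin 3 → ℝ, (∑ i, (n i) ^ 2 = 1) →
      ¬ IsLocalMinOn (Fb a b c) QSet (uniQ (sminus a b c) n)) := by
  have h27 : 27 * a * c < b ^ 2 := by
    have := (lt_div_iff₀ (by positivity)).1 ha
    linarith
  have hD : 0 < b ^ 2 - 24 * a * c := by nlinarith
  have he₀ : ∑ i, (Pi.single 0 1 : Fin 3 → ℝ) i ^ 2 = 1 := by simp [Fin.sum_univ_three]
  refine ⟨fun n hn => ?_, ⟨exists_nhds_Fb_zero_lt ha0 hb hc.le, ?_⟩, fun n hn hmin => ?_⟩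
  · rw [Fb_uniQ _ hn]
    refine ⟨uniaxialEnergy_splus_neg hb hc h27, fun Q hQ => uniaxialEnergy_splus_le_Fb hb hc h27 hQ,
      fun Q hQ => ⟨exists_eq_uniQ_splus_of_Fb_eq hb hc h27 hQ, ?_⟩⟩
    rintro ⟨m, hm, rfl⟩
    exact Fb_uniQ _ hm
  · refine ⟨uniQ (splus a b c) (Pi.single 0 1), uniQ_mem_QSet _ he₀, ?_⟩
    rw [Fb_uniQ _ he₀, Fb_zero]
    exact uniaxialEnergy_splus_neg hb hc h27
  · exact not_isLocalMin_uniaxialEnergy_sminus ha0 hb hc hD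
      (isLocalMin_uniaxialEnergy_of_isLocalMinOn hn hmin)
end
end
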